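/- arXiv:1912.05089 — 2 statements merged into one kernel-verified Lean document; each statement's English description precedes it below -/
import Mathlib

section
/- Fix d ≥ 2 and let V_d denote the ℂ-vector space of homogeneous polynomials of degree d in ℂ[X,Y,Z]. In the projectivization ℙ(V_d) of V_d, equipped with the quotient of the natural (Euclidean) topology on V_d ∖ {0}, the set of classes [f] such that f factors as a product f = g·h of two homogeneous polynomials g, h of positive degrees is closed. Consequently, the set of classes of irreducible homogeneous polynomials of degree d is open in ℙ(V_d). -/
/-!
Multiplication `V_k × V_l → V_(k+l)` is a bilinear map without zero divisors between
finite-dimensional spaces, and such a map has closed image: by compactness of the product of the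
unit spheres, `‖B x y‖ ≥ δ ‖x‖ ‖y‖` for some `δ > 0`, so `B` restricted to `S × E₂` (`S` the unit
sphere) is a proper map with the same image up to `0`. The reducible locus of `V_d` is the finite
union of these images over `0 < k < d`, a closed cone, hence closed in `ℙ(V_d)`.
Its complement is the irreducible locus: the lowest degree (the order as a power series) and the
total degree are both additive on products, so factors of a nonzero form are forms, and forms
of positive degree are not units.
-/

open MvPolynomial

/-- `Vd d` is the ℂ-vector space of homogeneous polynomials of total degree `d`
in `ℂ[X,Y,Z]`. -/
noncomputable abbrev Vd (d : ℕ) : Type :=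
  MvPolynomial.homogeneousSubmodule (Fin 3) ℂ d

/-- The Euclidean topology on the finite-dimensional complex vector space `Vd d`:
the topology induced by the (injective, linear) coefficient map into the product
`(Fin 3 →₀ ℕ) → ℂ`.  Since `Vd d` is finite-dimensional and the coefficient map is
a linear injection into a Hausdorff topological vector space, this is the standard
Euclidean topology of `Vd d`. -/
noncomputable instance (d : ℕ) : TopologicalSpace (Vd d) :=
  TopologicalSpace.induced
    (fun p => fun m => (p : MvPolynomial (Fin 3) ℂ).coeff m : Vd d → (Fin 3 →₀ ℕ) → ℂ)
    inferInstance

/-- The quotient topology on the projectivization of `Vd d`. -/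
noncomputable instance (d : ℕ) : TopologicalSpace (Projectivization ℂ (Vd d)) :=
  TopologicalSpace.coinduced (Projectivization.mk' ℂ) inferInstance

namespace MvPolynomial

variable {σ R : Type*}

section CommSemiring

variable [CommSemiring R] {p : MvPolynomial σ R}

theorem order_coe_le_totalDegree (hp : p ≠ 0) :
    (p : MvPowerSeries σ R).order ≤ p.totalDegree := by
  obtain ⟨d, hd⟩ := support_nonempty.mpr hp
  calc (p : MvPowerSeries σ R).order ≤ d.degree :=
        MvPowerSeries.order_le (by rwa [coeff_coe, ← mem_support_iff])
    _ ≤ p.totalDegree := by exact_mod_cast le_totalDegree hd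

theorem IsHomogeneous.le_order_coe {n : ℕ} (hp : p.IsHomogeneous n) :
    (n : ℕ∞) ≤ (p : MvPowerSeries σ R).order :=
  MvPowerSeries.nat_le_order fun d hd => by
    rw [coeff_coe]; exact hp.coeff_eq_zero hd.ne

theorem isHomogeneous_totalDegree_of_totalDegree_le_order
    (h : (p.totalDegree : ℕ∞) ≤ (p : MvPowerSeries σ R).order) :
    p.IsHomogeneous p.totalDegree := by
  intro d hd
  have h1 : (p : MvPowerSeries σ R).order ≤ d.degree :=
    MvPowerSeries.order_le (by rwa [coeff_coe])
  have h2 : d.degree ≤ p.totalDegree := le_totalDegree (mem_support_iff.mpr hd)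
  have h3 : d.degree = p.totalDegree := le_antisymm h2 (by exact_mod_cast h.trans h1)
  simpa [Finsupp.degree_eq_weight_one, Pi.one_def] using h3

end CommSemiring

section IsDomain

variable [CommRing R] [IsDomain R] {a b : MvPolynomial σ R} {n : ℕ}

theorem IsHomogeneous.isHomogeneous_totalDegree_of_mul (h : (a * b).IsHomogeneous n)
    (ha : a ≠ 0) (hb : b ≠ 0) :
    a.IsHomogeneous a.totalDegree ∧ b.IsHomogeneous b.totalDegree := by
  have hsum : (a.totalDegree + b.totalDegree : ℕ∞) ≤
      (a : MvPowerSeries σ R).order + (b : MvPowerSeries σ R).order := by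
    rw [← MvPowerSeries.order_mul, ← coe_mul, ← Nat.cast_add,
      ← totalDegree_mul_of_isDomain ha hb, h.totalDegree (mul_ne_zero ha hb)]
    exact h.le_order_coe
  have hoa := order_coe_le_totalDegree ha
  have hob := order_coe_le_totalDegree hb
  constructor <;> apply isHomogeneous_totalDegree_of_totalDegree_le_order
  all_goals
    generalize (a : MvPowerSeries σ R).order = oa at *
    generalize (b : MvPowerSeries σ R).order = ob at *
    lift oa to ℕ using (hoa.trans_lt (ENat.natCast_lt_top _)).ne
    lift ob to ℕ using (hob.trans_lt (ENat.natCast_lt_top _)).ne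
    norm_cast at *
    omega

theorem IsHomogeneous.not_isUnit (ha : a.IsHomogeneous n) (hn : 0 < n) : ¬IsUnit a := by
  intro hu
  have := ha.totalDegree hu.ne_zero
  rw [(isUnit_iff_totalDegree_of_isReduced.mp hu).2] at this
  omega

end IsDomain

theorem isUnit_of_totalDegree_eq_zero {K : Type*} [Field K] {a : MvPolynomial σ K}
    (ha : a ≠ 0) (h : a.totalDegree = 0) : IsUnit a := by
  rw [totalDegree_eq_zero_iff_eq_C] at h
  rw [h] at ha ⊢
  exact (Ne.isUnit fun h0 => ha (by rw [h0, C_0])).map C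

section FactorsIntoForms

variable [CommSemiring R]

def FactorsIntoForms (f : MvPolynomial σ R) : Prop :=
  ∃ (g h : MvPolynomial σ R) (d₁ d₂ : ℕ),
    0 < d₁ ∧ 0 < d₂ ∧ g.IsHomogeneous d₁ ∧ h.IsHomogeneous d₂ ∧ f = g * h

theorem FactorsIntoForms.smul {f : MvPolynomial σ R} (hf : f.FactorsIntoForms) (c : R) :
    (c • f).FactorsIntoForms := by
  obtain ⟨g, h, d₁, d₂, hd₁, hd₂, hg, hh, rfl⟩ := hf
  refine ⟨c • g, h, d₁, d₂, hd₁, hd₂, ?_, hh, (smul_mul_assoc ..).symm⟩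
  simpa [smul_eq_C_mul] using hg.C_mul c

theorem factorsIntoForms_iff_exists_mem_Ioo {f : MvPolynomial σ R} {d : ℕ}
    (hf : f.IsHomogeneous d) (hd : 2 ≤ d) :
    f.FactorsIntoForms ↔ ∃ k ∈ Finset.Ioo 0 d, ∃ g h : MvPolynomial σ R,
      g.IsHomogeneous k ∧ h.IsHomogeneous (d - k) ∧ f = g * h := by
  constructor
  · rintro ⟨g, h, d₁, d₂, hd₁, hd₂, hg, hh, rfl⟩
    by_cases hgh : g * h = 0
    · exact ⟨1, Finset.mem_Ioo.mpr ⟨one_pos, hd⟩, 0, 0, isHomogeneous_zero ..,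
        isHomogeneous_zero .., by rw [hgh, mul_zero]⟩
    have hdeg : d₁ + d₂ = d := (hg.mul hh).inj_right hf hgh
    obtain rfl : d - d₁ = d₂ := by omega
    exact ⟨d₁, Finset.mem_Ioo.mpr ⟨hd₁, by omega⟩, g, h, hg, hh, rfl⟩
  · rintro ⟨k, hk, g, h, hg, hh, rfl⟩
    rw [Finset.mem_Ioo] at hk
    exact ⟨g, h, k, d - k, hk.1, by omega, hg, hh, rfl⟩

end FactorsIntoForms

theorem irreducible_iff_not_factorsIntoForms {K : Type*} [Field K] {f : MvPolynomial σ K}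
    {d : ℕ} (hf : f.IsHomogeneous d) (hd : 0 < d) (hf0 : f ≠ 0) :
    Irreducible f ↔ ¬f.FactorsIntoForms := by
  constructor
  · rintro hirr ⟨g, h, d₁, d₂, hd₁, hd₂, hg, hh, rfl⟩
    rcases hirr.isUnit_or_isUnit rfl with hu | hu
    exacts [hg.not_isUnit hd₁ hu, hh.not_isUnit hd₂ hu]
  · refine fun hnot => ⟨hf.not_isUnit hd, fun a b hab => ?_⟩
    subst hab
    obtain ⟨ha, hb⟩ := mul_ne_zero_iff.mp hf0
    obtain ⟨hah, hbh⟩ := hf.isHomogeneous_totalDegree_of_mul ha hb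
    by_contra! hab
    refine hnot ⟨a, b, _, _, ?_, ?_, hah, hbh, rfl⟩
    · exact Nat.pos_of_ne_zero fun h0 => hab.1 (isUnit_of_totalDegree_eq_zero ha h0)
    · exact Nat.pos_of_ne_zero fun h0 => hab.2 (isUnit_of_totalDegree_eq_zero hb h0)

end MvPolynomial

theorem Irreducible.smul_of_ne_zero {K A : Type*} [Field K] [Semiring A] [Algebra K A]
    {a : A} (ha : Irreducible a) {c : K} (hc : c ≠ 0) : Irreducible (c • a) := by
  rwa [Algebra.smul_def, irreducible_isUnit_mul (hc.isUnit.map (algebraMap K A))]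

open Metric

namespace ContinuousLinearMap

variable {𝕜 E₁ E₂ F : Type*} [RCLike 𝕜]
  [NormedAddCommGroup E₁] [NormedSpace 𝕜 E₁] [ProperSpace E₁]
  [NormedAddCommGroup E₂] [NormedSpace 𝕜 E₂] [ProperSpace E₂]
  [NormedAddCommGroup F] [NormedSpace 𝕜 F]

theorem exists_pos_mul_le_norm_apply_apply (B : E₁ →L[𝕜] E₂ →L[𝕜] F)
    (hB : ∀ x y, B x y = 0 → x = 0 ∨ y = 0) :
    ∃ δ > 0, ∀ x y, δ * (‖x‖ * ‖y‖) ≤ ‖B x y‖ := by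
  have hpos : ∀ p ∈ sphere (0 : E₁) 1 ×ˢ sphere (0 : E₂) 1, 0 < ‖B p.1 p.2‖ :=
    fun p hp => norm_pos_iff.mpr fun h => by
      rcases hB _ _ h with h | h
      · simpa [h] using hp.1
      · simpa [h] using hp.2
  obtain ⟨δ, hδ, hmin⟩ := ((isCompact_sphere (0 : E₁) 1).prod
    (isCompact_sphere (0 : E₂) 1)).exists_forall_le' (by fun_prop) hpos
  refine ⟨δ, hδ, fun x y => ?_⟩
  rcases eq_or_ne x 0 with rfl | hx
  · simp
  rcases eq_or_ne y 0 with rfl | hy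
  · simp
  have := hmin ((‖x‖⁻¹ : 𝕜) • x, (‖y‖⁻¹ : 𝕜) • y)
    ⟨by simp [norm_smul, hx], by simp [norm_smul, hy]⟩
  simp only [map_smul, smul_apply, norm_smul, norm_inv, RCLike.norm_ofReal, abs_norm] at this
  rw [← mul_assoc, ← mul_inv, inv_mul_eq_div, le_div_iff₀ (by positivity)] at this
  linarith [mul_comm ‖x‖ ‖y‖]

theorem isClosed_range₂ (B : E₁ →L[𝕜] E₂ →L[𝕜] F) (hB : ∀ x y, B x y = 0 → x = 0 ∨ y = 0) :
    IsClosed (Set.range fun p : E₁ × E₂ => B p.1 p.2) := by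
  obtain ⟨δ, hδ, hBδ⟩ := B.exists_pos_mul_le_norm_apply_apply hB
  set φ : sphere (0 : E₁) 1 × E₂ → F := fun p => B p.1 p.2
  have hφ : IsProperMap φ := by
    refine isProperMap_iff_isCompact_preimage.mpr ⟨by fun_prop, fun K hK => ?_⟩
    obtain ⟨R, hR⟩ := hK.isBounded.subset_closedBall 0
    refine (isCompact_univ.prod (isCompact_closedBall (0 : E₂) (R / δ))).of_isClosed_subset
      (hK.isClosed.preimage (by fun_prop)) fun p hp => ⟨trivial, ?_⟩
    have h1 := hBδ p.1 p.2
    have h2 := mem_closedBall_zero_iff.mp (hR hp)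
    rw [norm_eq_of_mem_sphere, one_mul] at h1
    rw [mem_closedBall_zero_iff, le_div_iff₀ hδ]
    linarith
  have hrange : (Set.range fun p : E₁ × E₂ => B p.1 p.2) = {0} ∪ Set.range φ := by
    ext z
    constructor
    · rintro ⟨⟨x, y⟩, rfl⟩
      rcases eq_or_ne x 0 with rfl | hx
      · simp
      refine Or.inr ⟨(⟨(‖x‖⁻¹ : 𝕜) • x, by simp [norm_smul, hx]⟩, (‖x‖ : 𝕜) • y), ?_⟩
      simp [φ, smul_smul, hx]
    · rintro (rfl | ⟨⟨x, y⟩, rfl⟩)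
      · exact ⟨(0, 0), by simp⟩
      · exact ⟨(x, y), rfl⟩
  rw [hrange]
  exact isClosed_singleton.union hφ.isClosed_range

end ContinuousLinearMap

theorem LinearMap.isClosed_range₂ {𝕜 E₁ E₂ F : Type*} [RCLike 𝕜]
    [AddCommGroup E₁] [Module 𝕜 E₁] [TopologicalSpace E₁] [IsTopologicalAddGroup E₁]
    [ContinuousSMul 𝕜 E₁] [T2Space E₁] [FiniteDimensional 𝕜 E₁]
    [AddCommGroup E₂] [Module 𝕜 E₂] [TopologicalSpace E₂] [IsTopologicalAddGroup E₂]
    [ContinuousSMul 𝕜 E₂] [T2Space E₂] [FiniteDimensional 𝕜 E₂]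
    [AddCommGroup F] [Module 𝕜 F] [TopologicalSpace F] [IsTopologicalAddGroup F]
    [ContinuousSMul 𝕜 F] [T2Space F] [FiniteDimensional 𝕜 F]
    (B : E₁ →ₗ[𝕜] E₂ →ₗ[𝕜] F) (hB : ∀ x y, B x y = 0 → x = 0 ∨ y = 0) :
    IsClosed (Set.range fun p : E₁ × E₂ => B p.1 p.2) := by
  let e₁ := (Module.finBasis 𝕜 E₁).equivFun.toContinuousLinearEquiv
  let e₂ := (Module.finBasis 𝕜 E₂).equivFun.toContinuousLinearEquiv
  let e := (Module.finBasis 𝕜 F).equivFun.toContinuousLinearEquiv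
  let B' := LinearMap.toContinuousLinearMap (LinearMap.toContinuousLinearMap.toLinearMap ∘ₗ
    (B.compl₁₂ e₁.symm.toLinearMap e₂.symm.toLinearMap).compr₂ e.toLinearMap)
  have hB' : ∀ x y, B' x y = e (B (e₁.symm x) (e₂.symm y)) := fun _ _ => rfl
  have hrange : (Set.range fun p : E₁ × E₂ => B p.1 p.2) =
      e ⁻¹' Set.range fun p : _ × _ => B' p.1 p.2 := by
    ext z
    constructor
    · rintro ⟨⟨x, y⟩, rfl⟩
      exact ⟨(e₁ x, e₂ y), by simp [hB']⟩
    · rintro ⟨⟨x, y⟩, hxy⟩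
      exact ⟨(e₁.symm x, e₂.symm y), e.injective (by simpa [hB'] using hxy)⟩
  rw [hrange]
  refine (B'.isClosed_range₂ fun x y h => ?_).preimage e.continuous
  rw [hB', e.map_eq_zero_iff] at h
  simpa using hB _ _ h

namespace Projectivization

variable {K M : Type*} [DivisionRing K] [AddCommGroup M] [Module K M]

theorem preimage_mk'_setOf_exists_mk_eq {W : Submodule K M} {P : M → Prop}
    (hP : ∀ c : K, c ≠ 0 → ∀ f, P f → P (c • f)) :
    mk' K ⁻¹' {x : Projectivization K W | ∃ (f : M) (hf : f ∈ W) (h : (⟨f, hf⟩ : W) ≠ 0),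
      mk K ⟨f, hf⟩ h = x ∧ P f} = {v | P (v.1 : M)} := by
  ext ⟨⟨v, hvW⟩, hv⟩
  simp only [Set.mem_preimage, Set.mem_ofPred_eq, mk'_eq_mk]
  constructor
  · rintro ⟨f, hf, h, heq, hPf⟩
    obtain ⟨a, ha⟩ := (mk_eq_mk_iff K _ _ h hv).mp heq
    have ha' : a • v = f := congrArg Subtype.val ha
    have hv' : v = (a⁻¹ : Kˣ) • f := by rw [← ha', inv_smul_smul]
    rw [hv', Units.smul_def]
    exact hP _ (a⁻¹).ne_zero f hPf
  · exact fun hPv => ⟨v, hvW, hv, rfl, hPv⟩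

end Projectivization

namespace Vd

noncomputable def coeffs (d : ℕ) : Vd d →ₗ[ℂ] (Fin 3 →₀ ℕ) → ℂ :=
  (LinearMap.pi fun m => lcoeff ℂ m) ∘ₗ Submodule.subtype _

theorem coeffs_injective (d : ℕ) : Function.Injective (coeffs d) :=
  fun _ _ h => Subtype.ext (MvPolynomial.ext _ _ (congrFun h))

instance (d : ℕ) : IsTopologicalAddGroup (Vd d) := topologicalAddGroup_induced (coeffs d)

instance (d : ℕ) : ContinuousSMul ℂ (Vd d) := ContinuousSMul.induced (coeffs d)

instance (d : ℕ) : T2Space (Vd d) :=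
  (Topology.IsEmbedding.mk ⟨rfl⟩ (coeffs_injective d)).t2Space

instance (d : ℕ) : FiniteDimensional ℂ (Vd d) :=
  Module.Finite.iff_fg.mpr (homogeneousSubmodule_fg _ _ d)

theorem isClosed_setOf_eq_mul {k l n : ℕ} (hkl : k + l = n) :
    IsClosed {p : Vd n | ∃ g h : MvPolynomial (Fin 3) ℂ,
      g.IsHomogeneous k ∧ h.IsHomogeneous l ∧ (p : MvPolynomial (Fin 3) ℂ) = g * h} := by
  subst hkl
  have hrange : {p : Vd (k + l) | ∃ g h : MvPolynomial (Fin 3) ℂ,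
      g.IsHomogeneous k ∧ h.IsHomogeneous l ∧ (p : MvPolynomial (Fin 3) ℂ) = g * h} =
      Set.range fun q : Vd k × Vd l => DirectSum.gMulLHom ℂ (fun i => Vd i) q.1 q.2 := by
    ext p
    constructor
    · rintro ⟨g, h, hg, hh, hp⟩
      exact ⟨(⟨g, hg⟩, ⟨h, hh⟩), Subtype.ext hp.symm⟩
    · rintro ⟨⟨g, h⟩, rfl⟩
      exact ⟨g, h, g.2, h.2, rfl⟩
  rw [hrange]
  refine LinearMap.isClosed_range₂ _ fun g h hgh => ?_
  have : (g : MvPolynomial (Fin 3) ℂ) * h = 0 := congrArg Subtype.val hgh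
  simpa only [mul_eq_zero, ZeroMemClass.coe_eq_zero] using this

theorem isClosed_setOf_factorsIntoForms {d : ℕ} (hd : 2 ≤ d) :
    IsClosed {p : Vd d | (p : MvPolynomial (Fin 3) ℂ).FactorsIntoForms} := by
  have hunion : {p : Vd d | (p : MvPolynomial (Fin 3) ℂ).FactorsIntoForms} =
      ⋃ k ∈ Finset.Ioo 0 d, {p : Vd d | ∃ g h : MvPolynomial (Fin 3) ℂ,
        g.IsHomogeneous k ∧ h.IsHomogeneous (d - k) ∧ (p : MvPolynomial (Fin 3) ℂ) = g * h} := by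
    ext p
    simpa only [Set.mem_ofPred_eq, Set.mem_iUnion, exists_prop] using
      factorsIntoForms_iff_exists_mem_Ioo p.2 hd
  rw [hunion]
  exact isClosed_biUnion_finset fun k hk =>
    isClosed_setOf_eq_mul (Nat.add_sub_of_le (Finset.mem_Ioo.mp hk).2.le)

end Vd

/-- In `ℙ(V_d)` (`d ≥ 2`), the set of classes of degree-`d` homogeneous
polynomials that factor into two homogeneous polynomials of positive degrees is
closed; consequently the set of classes of irreducible ones is open. -/
theorem stmt_3 (d : ℕ) (hd : 2 ≤ d) :
    IsClosed {x : Projectivization ℂ (Vd d) |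
        ∃ (f : MvPolynomial (Fin 3) ℂ) (hfd : f ∈ homogeneousSubmodule (Fin 3) ℂ d)
          (hf : (⟨f, hfd⟩ : Vd d) ≠ 0),
          Projectivization.mk ℂ (⟨f, hfd⟩ : Vd d) hf = x ∧
          ∃ (g h : MvPolynomial (Fin 3) ℂ) (d₁ d₂ : ℕ),
            0 < d₁ ∧ 0 < d₂ ∧ g.IsHomogeneous d₁ ∧ h.IsHomogeneous d₂ ∧ f = g * h} ∧
    IsOpen {x : Projectivization ℂ (Vd d) |
        ∃ (f : MvPolynomial (Fin 3) ℂ) (hfd : f ∈ homogeneousSubmodule (Fin 3) ℂ d)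
          (hf : (⟨f, hfd⟩ : Vd d) ≠ 0),
          Projectivization.mk ℂ (⟨f, hfd⟩ : Vd d) hf = x ∧ Irreducible f} := by
  have hclosed :
      IsClosed {v : {v : Vd d // v ≠ 0} | (v : MvPolynomial (Fin 3) ℂ).FactorsIntoForms} :=
    (Vd.isClosed_setOf_factorsIntoForms hd).preimage continuous_subtype_val
  refine ⟨isClosed_coinduced.mpr ?_, isOpen_coinduced.mpr ?_⟩
  · convert hclosed using 1
    exact Projectivization.preimage_mk'_setOf_exists_mk_eq (P := FactorsIntoForms)
      fun c _ f hf => hf.smul c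
  · convert hclosed.isOpen_compl using 1
    rw [Projectivization.preimage_mk'_setOf_exists_mk_eq fun c hc f hf => hf.smul_of_ne_zero hc]
    ext v
    exact irreducible_iff_not_factorsIntoForms v.1.2 (by omega) (by simpa using v.2)
end

section
/- Let f ∈ ℂ[z] be a polynomial of degree n, let z₀ be a root of f of multiplicity k, and let r > 0 be such that z₀ is the only root of f in the closed disk of radius r about z₀. Then there exists δ > 0 such that every polynomial g ∈ ℂ[z] of degree exactly n, each of whose coefficients differs from the corresponding coefficient of f by less than δ, has exactly k roots counted with multiplicity in the open disk of radius r about z₀. -/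
/-!
Continuity of roots, by compactness. If the coefficients of polynomials `g m` of degree `n`
tend to those of `f`, their Cauchy bounds tend to that of `f`, so the root vectors of the
`g m` (in `ℂⁿ`, after enumerating the root multisets) are eventually bounded and a
subsequence converges to some `ζ`. Writing `g m = lc(g m) • ∏ (X - vᵢ)` and passing to the
limit coefficientwise gives `f = lc(f) • ∏ (X - ζᵢ)`. A root of `f` off the circle
`|z - z₀| = r` keeps the nearby roots of `g m` on its own side of that circle, so along the
subsequence the number of roots in the disk is eventually that of `f`, namely `k`.
Arguing by contradiction with `δ = 1/(m+1)` turns this into the `δ`-statement.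
-/

open Polynomial Filter Topology Metric Finset

theorem Multiset.exists_eq_map_univ_fin {α : Type*} {n : ℕ} (s : Multiset α)
    (hs : Multiset.card s = n) : ∃ v : Fin n → α, s = univ.val.map v := by
  subst hs
  refine ⟨fun i => s.toList.get (i.cast (by simp)), ?_⟩
  rw [Fin.univ_val_map]
  conv_lhs => rw [← Multiset.coe_toList s]
  congr 1
  apply List.ext_getElem <;> simp

theorem eventually_mem_iff_of_notMem_frontier {X : Type*} [TopologicalSpace X] {U : Set X}
    {x : X} (hx : x ∉ frontier U) : ∀ᶠ y in 𝓝 x, (y ∈ U ↔ x ∈ U) := by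
  by_cases hxU : x ∈ U
  · have hint : x ∈ interior U := (mem_interior_iff_notMem_frontier hxU).2 hx
    filter_upwards [isOpen_interior.mem_nhds hint] with y hy
      using iff_of_true (interior_subset hy) hxU
  · have hcl : x ∉ closure U := fun h => hx ⟨h, fun h' => hxU (interior_subset h')⟩
    filter_upwards [isClosed_closure.isOpen_compl.mem_nhds hcl] with y hy
      using iff_of_false (fun h => hy (subset_closure h)) hxU

theorem Filter.Tendsto.eventually_card_filter_map_univ_eq {α X ι : Type*} [TopologicalSpace X]
    [Fintype ι] {l : Filter α} {v : α → ι → X} {ζ : ι → X} (hv : Tendsto v l (𝓝 ζ))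
    (p : X → Prop) [DecidablePred p] (hζ : ∀ i, ζ i ∉ frontier {x | p x}) :
    ∀ᶠ a in l, Multiset.card ((univ.val.map (v a)).filter p) =
      Multiset.card ((univ.val.map ζ).filter p) := by
  have hmem : ∀ᶠ a in l, ∀ i, (p (v a i) ↔ p (ζ i)) := eventually_all.2 fun i =>
    (tendsto_pi_nhds.1 hv i).eventually (eventually_mem_iff_of_notMem_frontier (hζ i))
  filter_upwards [hmem] with a ha
  simp only [Multiset.filter_map, Multiset.card_map]
  exact congrArg _ (Multiset.filter_congr fun i _ => ha i)

theorem Polynomial.continuous_coeff_prod_X_sub_C {ι R : Type*} [CommRing R] [TopologicalSpace R]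
    [IsTopologicalRing R] (s : Finset ι) (j : ℕ) :
    Continuous fun v : ι → R => (∏ i ∈ s, (X - C (v i))).coeff j := by
  classical
  induction s using Finset.induction_on generalizing j with
  | empty => simp only [prod_empty]; exact continuous_const
  | insert a s ha ih =>
    simp only [prod_insert ha, coeff_mul]
    refine continuous_finsetSum _ fun x _ => Continuous.mul ?_ (ih _)
    simp only [coeff_sub, coeff_X, coeff_C]
    split_ifs <;> fun_prop

theorem Polynomial.tendsto_cauchyBound {α K : Type*} [NormedDivisionRing K] {l : Filter α}
    {f : K[X]} (hf : f ≠ 0) {g : α → K[X]} (hdeg : ∀ a, (g a).natDegree = f.natDegree)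
    (hcoeff : ∀ j, Tendsto (fun a => (g a).coeff j) l (𝓝 (f.coeff j))) :
    Tendsto (fun a => cauchyBound (g a)) l (𝓝 (cauchyBound f)) := by
  simp only [cauchyBound, leadingCoeff, hdeg]
  refine (Tendsto.div (Tendsto.finset_sup_nhds_apply fun j _ => (hcoeff j).nnnorm)
    (hcoeff _).nnnorm ?_).add tendsto_const_nhds
  rw [nnnorm_ne_zero_iff, ← leadingCoeff]
  exact leadingCoeff_ne_zero.2 hf

theorem Polynomial.exists_subseq_eventually_card_roots_filter_eq {f : ℂ[X]} (hf : f ≠ 0)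
    {g : ℕ → ℂ[X]} (hdeg : ∀ m, (g m).natDegree = f.natDegree)
    (hcoeff : ∀ j, Tendsto (fun m => (g m).coeff j) atTop (𝓝 (f.coeff j)))
    (p : ℂ → Prop) [DecidablePred p] (hp : ∀ z ∈ f.roots, z ∉ frontier {z | p z}) :
    ∃ φ : ℕ → ℕ, StrictMono φ ∧ ∀ᶠ m in atTop,
      Multiset.card ((g (φ m)).roots.filter p) = Multiset.card (f.roots.filter p) := by
  choose v hv using fun m => (g m).roots.exists_eq_map_univ_fin
    (IsAlgClosed.card_roots_eq_natDegree.trans (hdeg m))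
  have hfactor : ∀ m, g m = C (g m).leadingCoeff * ∏ i, (X - C (v m i)) := fun m => by
    conv_lhs => rw [← C_leadingCoeff_mul_prod_multiset_X_sub_C
      (IsAlgClosed.card_roots_eq_natDegree (p := g m)), hv m, Multiset.map_map]
    rfl
  have hbounded : ∀ᶠ m in atTop, v m ∈ closedBall 0 (cauchyBound f + 1) := by
    filter_upwards [(tendsto_cauchyBound hf hdeg hcoeff).eventually
      (gt_mem_nhds (lt_add_one (cauchyBound f)))] with m hm
    refine mem_closedBall_zero_iff.2 ((pi_norm_le_iff_of_nonneg (by positivity)).2 fun i => ?_)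
    have hmem : v m i ∈ (g m).roots := hv m ▸ Multiset.mem_map_of_mem _ (mem_univ i)
    exact_mod_cast ((isRoot_of_mem_roots hmem).norm_lt_cauchyBound (ne_zero_of_mem_roots hmem)
      |>.trans hm).le
  obtain ⟨ζ, -, φ, hφ, hζ⟩ :=
    tendsto_subseq_of_frequently_bounded isBounded_closedBall hbounded.frequently
  have hf_eq : f = C f.leadingCoeff * ∏ i, (X - C (ζ i)) := by
    ext j
    have hlead : Tendsto (fun m => (g m).leadingCoeff) atTop (𝓝 f.leadingCoeff) := by
      simpa only [leadingCoeff, hdeg] using hcoeff f.natDegree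
    refine tendsto_nhds_unique ((hcoeff j).comp hφ.tendsto_atTop) ?_
    rw [coeff_C_mul]
    refine ((hlead.comp hφ.tendsto_atTop).mul
      (((continuous_coeff_prod_X_sub_C _ j).tendsto ζ).comp hζ)).congr fun m => ?_
    simp only [Function.comp_apply]
    rw [← coeff_C_mul, ← hfactor]
  have hroots : f.roots = univ.val.map ζ := by
    conv_lhs => rw [hf_eq]
    rw [roots_C_mul _ (leadingCoeff_ne_zero.2 hf), ← prod_map_val]
    simpa only [Multiset.map_map, Function.comp_def] using
      roots_multiset_prod_X_sub_C (univ.val.map ζ)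
  refine ⟨φ, hφ, ?_⟩
  simpa only [hv, hroots, Function.comp_apply] using
    hζ.eventually_card_filter_map_univ_eq p fun i =>
      hp _ (hroots ▸ Multiset.mem_map_of_mem _ (mem_univ i))

theorem Polynomial.eventually_card_roots_filter_eq {f : ℂ[X]} (hf : f ≠ 0)
    {g : ℕ → ℂ[X]} (hdeg : ∀ m, (g m).natDegree = f.natDegree)
    (hcoeff : ∀ j, Tendsto (fun m => (g m).coeff j) atTop (𝓝 (f.coeff j)))
    (p : ℂ → Prop) [DecidablePred p] (hp : ∀ z ∈ f.roots, z ∉ frontier {z | p z}) :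
    ∀ᶠ m in atTop,
      Multiset.card ((g m).roots.filter p) = Multiset.card (f.roots.filter p) := by
  by_contra h
  obtain ⟨φ, hφ, hne⟩ := extraction_of_frequently_atTop (not_eventually.1 h)
  obtain ⟨ψ, -, hψ⟩ := exists_subseq_eventually_card_roots_filter_eq hf (fun m => hdeg (φ m))
    (fun j => (hcoeff j).comp hφ.tendsto_atTop) p hp
  obtain ⟨m, hm⟩ := hψ.exists
  exact hne _ hm

theorem stmt_5_general (f : Polynomial ℂ) (n : ℕ) (hf : f.degree = (n : ℕ))
    (z₀ : ℂ) (k : ℕ) (hk : f.rootMultiplicity z₀ = k)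
    (r : ℝ) (hr : 0 < r)
    (honly : ∀ z : ℂ, f.IsRoot z → ‖z - z₀‖ ≤ r → z = z₀) :
    ∃ δ > (0 : ℝ), ∀ g : Polynomial ℂ, g.degree = (n : ℕ) →
      (∀ j : ℕ, ‖f.coeff j - g.coeff j‖ < δ) →
      Multiset.card (g.roots.filter (fun z => ‖z - z₀‖ < r)) = k := by
  have hf0 : f ≠ 0 := by rintro rfl; simp at hf
  have hfn : f.natDegree = n := natDegree_eq_of_degree_eq_some hf
  have hfrontier : ∀ z ∈ f.roots, z ∉ frontier {z | ‖z - z₀‖ < r} := fun z hz hzf => by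
    have hzr : ‖z - z₀‖ = r :=
      frontier_lt_subset_eq (continuous_id.sub continuous_const).norm continuous_const hzf
    rw [honly z (isRoot_of_mem_roots hz) hzr.le, sub_self, norm_zero] at hzr
    exact hr.ne hzr
  have hcount : Multiset.card (f.roots.filter fun z => ‖z - z₀‖ < r) = k := by
    rw [← hk, ← count_roots, Multiset.count_eq_card_filter_eq]
    congr 1
    refine Multiset.filter_congr fun z hz =>
      ⟨fun h => (honly z (isRoot_of_mem_roots hz) h.le).symm, ?_⟩
    rintro rfl
    simpa using hr
  by_contra! hbad
  choose g hgdeg hgclose hgcard using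
    fun m : ℕ => hbad (1 / ((m : ℝ) + 1)) Nat.one_div_pos_of_nat
  have hcoeff : ∀ j, Tendsto (fun m => (g m).coeff j) atTop (𝓝 (f.coeff j)) := fun j =>
    tendsto_iff_norm_sub_tendsto_zero.2 <| squeeze_zero (fun _ => norm_nonneg _)
      (fun m => by rw [norm_sub_rev]; exact (hgclose m j).le)
      tendsto_one_div_add_atTop_nhds_zero_nat
  obtain ⟨m, hm⟩ := (eventually_card_roots_filter_eq hf0
    (fun m => (natDegree_eq_of_degree_eq_some (hgdeg m)).trans hfn.symm) hcoeff _ hfrontier).exists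
  exact hgcard m (hm.trans hcount)

/-- If `z₀` is a root of `f` of multiplicity `k` and the only root of `f` in the
closed disk of radius `r` about `z₀`, then every polynomial `g` of the same degree
whose coefficients are all within `δ` of those of `f` (for suitable `δ > 0`) has
exactly `k` roots, counted with multiplicity, in the open disk of radius `r`
about `z₀`. -/
theorem stmt_5 (f : Polynomial ℂ) (n : ℕ) (hf : f.degree = (n : ℕ))
    (z₀ : ℂ) (hz₀ : f.IsRoot z₀) (k : ℕ) (hk : f.rootMultiplicity z₀ = k)
    (r : ℝ) (hr : 0 < r)
    (honly : ∀ z : ℂ, f.IsRoot z → ‖z - z₀‖ ≤ r → z = z₀) :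
    ∃ δ > (0 : ℝ), ∀ g : Polynomial ℂ, g.degree = (n : ℕ) →
      (∀ j : ℕ, ‖f.coeff j - g.coeff j‖ < δ) →
      Multiset.card (g.roots.filter (fun z => ‖z - z₀‖ < r)) = k :=
  stmt_5_general f n hf z₀ k hk r hr honly
end
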